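/- arXiv:1812.05451 — 2 statements merged into one kernel-verified Lean document; each statement's English description precedes it below -/
import Mathlib

section
/- Suppose $I$ is a zero-truncated Poisson random variable with parameter $\lambda > 0$, and conditionally on $I = n$, the vector $(N_1, \dots, N_k)$ is multinomial with $n$ trials and probabilities $(p_1, \dots, p_k)$ summing to 1. Then for distinct indices $i$ and $1$, $P(N_i > 0 \wedge N_1 > 0) = \frac{e^\lambda - e^{\lambda(1-p_1)} - e^{\lambda(1-p_i)} + e^{\lambda(1-p_1-p_i)}}{e^\lambda - 1}$. -/
open Real Finset

/-- The multinomial pmf with `n` trials and probability vector `p` on `Fin k`. -/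
noncomputable def multinomialPMF {k : ℕ} (n : ℕ) (p : Fin k → ℝ) (x : Fin k → ℕ) : ℝ :=
  if ∑ j, x j = n then (Nat.multinomial Finset.univ x : ℝ) * ∏ j, p j ^ x j else 0

lemma multinomialPMF_ne_zero {k n : ℕ} (q : Fin k → ℝ) (x : Fin k → ℕ)
    (hx : x ∉ Finset.piAntidiag Finset.univ n) : multinomialPMF n q x = 0 := by
  rw [Finset.mem_piAntidiag] at hx
  have : ∑ j, x j ≠ n := fun h => hx ⟨h, fun i _ => Finset.mem_univ i⟩
  simp [multinomialPMF, this]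

lemma summable_multinomialPMF {k n : ℕ} (q : Fin k → ℝ) :
    Summable (multinomialPMF n q) :=
  summable_of_ne_finset_zero (fun x hx => multinomialPMF_ne_zero q x hx)

lemma tsum_multinomialPMF {k : ℕ} (n : ℕ) (q : Fin k → ℝ) :
    ∑' x : Fin k → ℕ, multinomialPMF n q x = (∑ j, q j) ^ n := by
  rw [Finset.sum_pow_eq_sum_piAntidiag,
    tsum_eq_sum (s := Finset.piAntidiag Finset.univ n)
      (fun x hx => multinomialPMF_ne_zero q x hx)]
  refine Finset.sum_congr rfl fun x hx => ?_
  rw [Finset.mem_piAntidiag] at hx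
  simp [multinomialPMF, hx.1]

lemma multinomialPMF_update {k : ℕ} (m : ℕ) (q : Fin k → ℝ) (i : Fin k) (x : Fin k → ℕ) :
    multinomialPMF m (Function.update q i 0) x = if x i = 0 then multinomialPMF m q x else 0 := by
  unfold multinomialPMF
  by_cases hx : x i = 0
  · have hprod : ∏ j, Function.update q i 0 j ^ x j = ∏ j, q j ^ x j := by
      refine Finset.prod_congr rfl fun j _ => ?_
      by_cases hj : j = i
      · subst hj; simp [hx]
      · simp [Function.update_of_ne hj]
    simp [hx, hprod]
  · have h0 : ∏ j, Function.update q i 0 j ^ x j = 0 :=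
      Finset.prod_eq_zero (Finset.mem_univ i) (by simp [zero_pow hx])
    simp [hx, h0]

lemma exp_tail (t : ℝ) :
    ∑' n : ℕ, t ^ (n + 1) / (Nat.factorial (n + 1) : ℝ) = Real.exp t - 1 := by
  have hs := Real.summable_pow_div_factorial t
  have hexp : Real.exp t = ∑' n : ℕ, t ^ n / (Nat.factorial n : ℝ) := by
    rw [Real.exp_eq_exp_ℝ, NormedSpace.exp_eq_tsum_div]
  rw [hexp, Summable.tsum_eq_zero_add hs]
  simp

/-- With a zero-truncated Poisson number of trials and multinomial allocation,
the joint positivity probability of two distinct components `i₁, i₂` equals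
`(e^λ - e^{λ(1-p i₁)} - e^{λ(1-p i₂)} + e^{λ(1-p i₁-p i₂)})/(e^λ - 1)`. -/
theorem mixed_poisson_multinomial_joint_positive {k : ℕ} (lam : ℝ) (hlam : 0 < lam)
    (p : Fin k → ℝ) (hp : ∀ j, 0 ≤ p j) (hsum : ∑ j, p j = 1)
    (i₁ i₂ : Fin k) (hij : i₁ ≠ i₂) :
    ∑' n : ℕ, (lam ^ (n + 1) / ((Nat.factorial (n + 1) : ℝ) * (Real.exp lam - 1))) *
        (∑' x : Fin k → ℕ, (if 0 < x i₁ ∧ 0 < x i₂ then multinomialPMF (n + 1) p x else 0)) =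
      (Real.exp lam - Real.exp (lam * (1 - p i₁)) - Real.exp (lam * (1 - p i₂)) +
        Real.exp (lam * (1 - p i₁ - p i₂))) / (Real.exp lam - 1) := by
  classical
  set q1 := Function.update p i₁ 0 with hq1
  set q2 := Function.update p i₂ 0 with hq2
  set q12 := Function.update q1 i₂ 0 with hq12
  have hsq1 : ∑ j, q1 j = 1 - p i₁ := by
    rw [hq1, Finset.sum_update_of_mem (Finset.mem_univ i₁), ← hsum,
      ← Finset.sum_erase_add Finset.univ p (Finset.mem_univ i₁)]
    simp [Finset.sdiff_singleton_eq_erase]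
  have hsq2 : ∑ j, q2 j = 1 - p i₂ := by
    rw [hq2, Finset.sum_update_of_mem (Finset.mem_univ i₂), ← hsum,
      ← Finset.sum_erase_add Finset.univ p (Finset.mem_univ i₂)]
    simp [Finset.sdiff_singleton_eq_erase]
  have hsq12 : ∑ j, q12 j = 1 - p i₁ - p i₂ := by
    rw [hq12, Finset.sum_update_of_mem (Finset.mem_univ i₂), zero_add]
    have h : ∑ x ∈ Finset.univ \ {i₂}, q1 x = (∑ j, q1 j) - q1 i₂ := by
      rw [Finset.sdiff_singleton_eq_erase, Finset.sum_erase_eq_sub (Finset.mem_univ i₂)]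
    rw [h, hsq1, hq1, Function.update_of_ne (Ne.symm hij)]
  -- pointwise decomposition of the inner summand
  have hpt : ∀ (m : ℕ) (x : Fin k → ℕ),
      (if 0 < x i₁ ∧ 0 < x i₂ then multinomialPMF m p x else 0) =
      multinomialPMF m p x - multinomialPMF m q1 x - multinomialPMF m q2 x
        + multinomialPMF m q12 x := by
    intro m x
    have h1 := multinomialPMF_update m p i₁ x
    have h2 := multinomialPMF_update m p i₂ x
    have h12 := multinomialPMF_update m q1 i₂ x
    rw [← hq1] at h1; rw [← hq2] at h2; rw [← hq12] at h12
    rw [h1, h2, h12, h1]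
    by_cases hx1 : x i₁ = 0 <;> by_cases hx2 : x i₂ = 0 <;>
      simp [hx1, hx2, Nat.pos_iff_ne_zero] <;> ring
  have hinner : ∀ m : ℕ,
      (∑' x : Fin k → ℕ, (if 0 < x i₁ ∧ 0 < x i₂ then multinomialPMF m p x else 0)) =
      1 - (1 - p i₁) ^ m - (1 - p i₂) ^ m + (1 - p i₁ - p i₂) ^ m := by
    intro m
    have e : (fun x : Fin k → ℕ => if 0 < x i₁ ∧ 0 < x i₂ then multinomialPMF m p x else 0) =
        fun x => multinomialPMF m p x - multinomialPMF m q1 x - multinomialPMF m q2 x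
          + multinomialPMF m q12 x := funext (hpt m)
    rw [e]
    have s0 := summable_multinomialPMF (n := m) p
    have s1 := summable_multinomialPMF (n := m) q1
    have s2 := summable_multinomialPMF (n := m) q2
    have s12 := summable_multinomialPMF (n := m) q12
    rw [Summable.tsum_add ((s0.sub s1).sub s2) s12, Summable.tsum_sub (s0.sub s1) s2, Summable.tsum_sub s0 s1,
      tsum_multinomialPMF, tsum_multinomialPMF, tsum_multinomialPMF, tsum_multinomialPMF,
      hsum, hsq1, hsq2, hsq12]
    simp
  -- outer sum
  have E1 : Real.exp lam - 1 ≠ 0 := by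
    have : (1:ℝ) < Real.exp lam := by
      rw [← Real.exp_zero]; exact Real.exp_lt_exp.2 hlam
    linarith
  have hterm : ∀ n : ℕ,
      (lam ^ (n + 1) / ((Nat.factorial (n + 1) : ℝ) * (Real.exp lam - 1))) *
        (∑' x : Fin k → ℕ, (if 0 < x i₁ ∧ 0 < x i₂ then multinomialPMF (n + 1) p x else 0)) =
      (lam ^ (n+1) / (Nat.factorial (n+1) : ℝ)
        - (lam * (1 - p i₁)) ^ (n+1) / (Nat.factorial (n+1) : ℝ)
        - (lam * (1 - p i₂)) ^ (n+1) / (Nat.factorial (n+1) : ℝ)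
        + (lam * (1 - p i₁ - p i₂)) ^ (n+1) / (Nat.factorial (n+1) : ℝ)) * (Real.exp lam - 1)⁻¹ := by
    intro n
    rw [hinner (n+1), mul_pow lam (1 - p i₁), mul_pow lam (1 - p i₂),
      mul_pow lam (1 - p i₁ - p i₂)]
    have hf : ((Nat.factorial (n+1) : ℝ)) ≠ 0 := Nat.cast_ne_zero.2 (Nat.factorial_ne_zero _)
    field_simp
  rw [tsum_congr hterm]
  have sumtail : ∀ t : ℝ, Summable (fun n : ℕ => t ^ (n+1) / (Nat.factorial (n+1) : ℝ)) := by
    intro t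
    exact (summable_nat_add_iff 1).2 (Real.summable_pow_div_factorial t)
  have sA := sumtail lam
  have sB := sumtail (lam * (1 - p i₁))
  have sC := sumtail (lam * (1 - p i₂))
  have sD := sumtail (lam * (1 - p i₁ - p i₂))
  rw [tsum_mul_right, Summable.tsum_add ((sA.sub sB).sub sC) sD, Summable.tsum_sub (sA.sub sB) sC,
    Summable.tsum_sub sA sB, exp_tail, exp_tail, exp_tail, exp_tail]
  field_simp
  ring
end

section
/- In the exact (non-independence-approximated) model where $I$ is zero-truncated Poisson($\lambda$) and $(N_1,\dots,N_k) | I = n$ is multinomial$(n; p_1,\dots,p_k)$, the exact expected privacy loss $\mathbb{E}[D] = \sum_{i=2}^k m_i \frac{e^\lambda - e^{\lambda(1-p_1)} - e^{\lambda(1-p_i)} + e^{\lambda(1-p_1-p_i)}}{e^\lambda - 1}$ satisfies, as $p_1 \to 0^+$ with $\lambda, p_i, m_i$ fixed, $\mathbb{E}[D] = \lambda p_1 \sum_{i=2}^k m_i \frac{e^\lambda - e^{\lambda(1-p_i)}}{e^\lambda - 1} + o(p_1)$. -/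
open Real Finset Filter Topology Asymptotics

/-!
Writing `y = 1 - e^{-λ p₁}`, each summand factors as
`e^λ - e^{λ(1-p₁)} - e^{λ(1-pᵢ)} + e^{λ(1-p₁-pᵢ)} = (e^λ - e^{λ(1-pᵢ)}) y`
(Poisson thinning makes the two "some input" events independent). Hence the difference in the
theorem is the constant `∑ mᵢ (e^λ - e^{λ(1-pᵢ)}) / (e^λ - 1)` times `1 - e^{-λ p₁} - λ p₁`,
which is `o(p₁)` because `λ` is the derivative of `1 - e^{-λ x}` at `0`.
-/

lemma exp_sub_exp_sub_exp_add_exp_eq_mul (a x q : ℝ) :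
    exp a - exp (a * (1 - x)) - exp (a * (1 - q)) + exp (a * (1 - x - q)) =
      (exp a - exp (a * (1 - q))) * (1 - exp (-(a * x))) := by
  have hx : exp (a * (1 - x)) = exp a * exp (-(a * x)) := by rw [← exp_add]; ring_nf
  have hxq : exp (a * (1 - x - q)) = exp (a * (1 - q)) * exp (-(a * x)) := by
    rw [← exp_add]; ring_nf
  rw [hx, hxq]
  ring

lemma isLittleO_one_sub_exp_neg_mul_sub_mul (a : ℝ) :
    (fun x : ℝ => 1 - exp (-(a * x)) - a * x) =o[𝓝 0] fun x => x := by
  have hderiv : HasDerivAt (fun x : ℝ => 1 - exp (-(a * x))) a 0 := by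
    simpa using (((hasDerivAt_id (0 : ℝ)).const_mul a).fun_neg.exp).const_sub 1
  simpa [mul_comm] using hasDerivAt_iff_isLittleO.mp hderiv

theorem exact_privacy_loss_asymptotics_general (k : ℕ) (lam : ℝ)
    (p m : ℕ → ℝ) :
    (fun p₁ : ℝ =>
        (∑ i ∈ Finset.Icc 2 k, m i *
          ((Real.exp lam - Real.exp (lam * (1 - p₁)) - Real.exp (lam * (1 - p i)) +
            Real.exp (lam * (1 - p₁ - p i))) / (Real.exp lam - 1))) -
        lam * p₁ * ∑ i ∈ Finset.Icc 2 k, m i *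
          ((Real.exp lam - Real.exp (lam * (1 - p i))) / (Real.exp lam - 1)))
      =o[nhdsWithin 0 (Set.Ioi 0)] (fun p₁ : ℝ => p₁) := by
  set C := ∑ i ∈ Finset.Icc 2 k, m i *
    ((Real.exp lam - Real.exp (lam * (1 - p i))) / (Real.exp lam - 1))
  have hfactor : ∀ x : ℝ,
      (∑ i ∈ Finset.Icc 2 k, m i *
        ((Real.exp lam - Real.exp (lam * (1 - x)) - Real.exp (lam * (1 - p i)) +
          Real.exp (lam * (1 - x - p i))) / (Real.exp lam - 1))) = C * (1 - exp (-(lam * x))) := by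
    intro x
    simp only [exp_sub_exp_sub_exp_add_exp_eq_mul, C, sum_mul]
    exact sum_congr rfl fun i _ => by ring
  simp only [hfactor]
  refine (((isLittleO_one_sub_exp_neg_mul_sub_mul lam).const_mul_left C).mono
    nhdsWithin_le_nhds).congr_left fun x => by ring

/-- Rigorous version of Proposition 2 (privacy-conscious asymptotics): the exact expected
privacy loss `E[D](p₁) = ∑_{i=2}^k m i (e^λ - e^{λ(1-p₁)} - e^{λ(1-p i)} + e^{λ(1-p₁-p i)})/(e^λ-1)`
satisfies `E[D](p₁) = λ p₁ ∑_{i=2}^k m i (e^λ - e^{λ(1-p i)})/(e^λ - 1) + o(p₁)` as `p₁ → 0⁺`. -/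
theorem exact_privacy_loss_asymptotics (k : ℕ) (lam : ℝ) (hlam : 0 < lam)
    (p m : ℕ → ℝ) (hp : ∀ i, 0 < p i) (hp1 : ∀ i, p i ≤ 1) (hm : ∀ i, 0 ≤ m i) :
    (fun p₁ : ℝ =>
        (∑ i ∈ Finset.Icc 2 k, m i *
          ((Real.exp lam - Real.exp (lam * (1 - p₁)) - Real.exp (lam * (1 - p i)) +
            Real.exp (lam * (1 - p₁ - p i))) / (Real.exp lam - 1))) -
        lam * p₁ * ∑ i ∈ Finset.Icc 2 k, m i *
          ((Real.exp lam - Real.exp (lam * (1 - p i))) / (Real.exp lam - 1)))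
      =o[nhdsWithin 0 (Set.Ioi 0)] (fun p₁ : ℝ => p₁) :=
  exact_privacy_loss_asymptotics_general k lam p m
end
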